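/- For every integer q with |q| ≥ 2, the value ρ(1/q) = Σ_{n=0}^∞ (1/q)^{2n(n+1)} / ∏_{k=0}^{n} (1 + (1/q)^{2k+1} + (1/q)^{4k+2}) is irrational; i.e., Watson's third-order mock theta function ρ takes an irrational value at each point ±1/2, ±1/3, ±1/4, … . -/

import Mathlib

namespace WatsonAux

/-- The integer denominators `D q k = q^(4k+2) + q^(2k+1) + 1`. -/
def D (q : ℤ) (k : ℕ) : ℤ := q ^ (4 * k + 2) + q ^ (2 * k + 1) + 1

lemma two_le_abs_pow (q : ℤ) (hq : 2 ≤ |q|) (m : ℕ) (hm : m ≠ 0) : 2 ≤ |q| ^ m :=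
  le_trans hq (le_self_pow₀ (by linarith) hm)

lemma D_lb (q : ℤ) (hq : 2 ≤ |q|) (k : ℕ) : |q| ^ (4 * k + 2) ≤ 2 * D q k := by
  have ht : 2 ≤ |q| ^ (2 * k + 1) := two_le_abs_pow q hq _ (by omega)
  have h1 : q ^ (4 * k + 2) = (|q| ^ (2 * k + 1)) ^ 2 := by
    rw [← abs_pow, sq_abs, ← pow_mul]; ring_nf
  have h2 : -(|q| ^ (2 * k + 1)) ≤ q ^ (2 * k + 1) := by
    rw [← abs_pow]; exact neg_abs_le _
  have h3 : |q| ^ (4 * k + 2) = (|q| ^ (2 * k + 1)) ^ 2 := by rw [← pow_mul]; ring_nf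
  unfold D
  nlinarith [sq_nonneg (|q| ^ (2 * k + 1))]

lemma D_pos (q : ℤ) (hq : 2 ≤ |q|) (k : ℕ) : 0 < D q k := by
  have h := D_lb q hq k
  have : (0:ℤ) < |q| ^ (4 * k + 2) := pow_pos (by linarith) _
  linarith

/-- Real version of the series terms, with integer denominators. -/
noncomputable def g (q : ℤ) (n : ℕ) : ℝ :=
  (q : ℝ) ^ (2 * (n + 1)) / ∏ k ∈ Finset.range (n + 1), (D q k : ℝ)

lemma Dr_pos (q : ℤ) (hq : 2 ≤ |q|) (k : ℕ) : (0:ℝ) < (D q k : ℝ) := by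
  exact_mod_cast D_pos q hq k

lemma prodD_pos (q : ℤ) (hq : 2 ≤ |q|) (m : ℕ) :
    (0:ℝ) < ∏ k ∈ Finset.range m, (D q k : ℝ) :=
  Finset.prod_pos fun k _ => Dr_pos q hq k

lemma qr_ne (q : ℤ) (hq : 2 ≤ |q|) : (q : ℝ) ≠ 0 := by
  have : q ≠ 0 := by rintro rfl; simp at hq
  exact_mod_cast this

lemma g_pos (q : ℤ) (hq : 2 ≤ |q|) (n : ℕ) : 0 < g q n := by
  apply div_pos _ (prodD_pos q hq _)
  have hne : (q:ℝ) ^ (n+1) ≠ 0 := pow_ne_zero _ (qr_ne q hq)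
  have h2 : (q:ℝ) ^ (2 * (n + 1)) = ((q:ℝ) ^ (n+1)) ^ 2 := by rw [← pow_mul]; ring_nf
  rw [h2]
  exact (sq_nonneg _).lt_of_ne (Ne.symm (pow_ne_zero 2 hne))

lemma g_succ (q : ℤ) (hq : 2 ≤ |q|) (n : ℕ) :
    g q (n + 1) = g q n * ((q:ℝ) ^ 2 / (D q (n + 1) : ℝ)) := by
  unfold g
  rw [Finset.prod_range_succ]
  have h1 : (q:ℝ) ^ (2 * (n + 1 + 1)) = (q:ℝ) ^ (2 * (n + 1)) * (q:ℝ) ^ 2 := by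
    rw [← pow_add]; ring_nf
  rw [h1]
  field_simp

lemma ratio_le (q : ℤ) (hq : 2 ≤ |q|) (n : ℕ) :
    (q:ℝ) ^ 2 / (D q (n + 1) : ℝ) ≤ 1 / 2 := by
  have hD : (|q| : ℤ) ^ (4 * (n+1) + 2) ≤ 2 * D q (n+1) := D_lb q hq (n+1)
  have key : 4 * q ^ 2 ≤ |q| ^ (4 * (n+1) + 2) := by
    have h1 : |q| ^ (4 * (n+1) + 2) = |q| ^ (4 * n + 4) * |q| ^ 2 := by
      rw [← pow_add]; ring_nf
    have h2 : (4:ℤ) ≤ |q| ^ (4 * n + 4) := by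
      calc (4:ℤ) = 2 ^ 2 := by norm_num
      _ ≤ |q| ^ 2 := pow_le_pow_left₀ (by norm_num) hq 2
      _ ≤ |q| ^ (4 * n + 4) := pow_le_pow_right₀ (by linarith) (by omega)
    have h3 : |q| ^ 2 = q ^ 2 := sq_abs q
    nlinarith [sq_nonneg q]
  have hDpos := Dr_pos q hq (n+1)
  rw [div_le_div_iff₀ hDpos (by norm_num)]
  have : (4:ℝ) * (q:ℝ) ^ 2 ≤ 2 * (D q (n+1) : ℝ) := by
    have : ((4 * q ^ 2 : ℤ) : ℝ) ≤ ((2 * D q (n+1) : ℤ) : ℝ) := by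
      exact_mod_cast le_trans key hD
    push_cast at this; linarith
  linarith

lemma g_decay (q : ℤ) (hq : 2 ≤ |q|) (n m : ℕ) :
    g q (n + m) ≤ g q n * (1 / 2) ^ m := by
  induction m with
  | zero => simp
  | succ m ih =>
    have h1 : g q (n + (m + 1)) = g q (n + m) * ((q:ℝ)^2 / (D q (n + m + 1) : ℝ)) := by
      rw [← g_succ q hq (n + m)]; ring_nf
    rw [h1]
    calc g q (n + m) * ((q:ℝ)^2 / (D q (n + m + 1) : ℝ))
        ≤ g q (n + m) * (1/2) := by
          apply mul_le_mul_of_nonneg_left (ratio_le q hq (n + m)) (g_pos q hq _).le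
      _ ≤ (g q n * (1/2)^m) * (1/2) := by nlinarith
      _ = g q n * (1/2)^(m+1) := by ring

lemma g_summable (q : ℤ) (hq : 2 ≤ |q|) : Summable (g q) := by
  have hgeo : Summable (fun n : ℕ => g q 0 * (1/2:ℝ)^n) :=
    (summable_geometric_of_lt_one (by norm_num) (by norm_num)).mul_left _
  exact Summable.of_nonneg_of_le (fun n => (g_pos q hq n).le)
    (fun n => by simpa using g_decay q hq 0 n) hgeo

lemma sum_exp (m : ℕ) : ∑ k ∈ Finset.range m, (4 * k + 2) = 2 * m ^ 2 := by
  induction m with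
  | zero => simp
  | succ m ih => rw [Finset.sum_range_succ, ih]; ring

lemma f_eq_g (q : ℤ) (hq : 2 ≤ |q|) (n : ℕ) :
    (1 / (q : ℝ)) ^ (2 * n * (n + 1)) /
        ∏ k ∈ Finset.range (n + 1),
          (1 + (1 / (q : ℝ)) ^ (2 * k + 1) + (1 / (q : ℝ)) ^ (4 * k + 2)) = g q n := by
  have hq0 := qr_ne q hq
  have hfac : ∀ k ∈ Finset.range (n+1),
      1 + (1 / (q : ℝ)) ^ (2 * k + 1) + (1 / (q : ℝ)) ^ (4 * k + 2)
        = (D q k : ℝ) / (q:ℝ) ^ (4 * k + 2) := by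
    intro k _
    rw [D]
    push_cast
    rw [eq_div_iff (pow_ne_zero _ hq0), one_div, inv_pow, inv_pow]
    have e : (q:ℝ) ^ (4 * k + 2) = q ^ (2*k+1) * q ^ (2*k+1) := by rw [← pow_add]; ring_nf
    have h1 : (q:ℝ) ^ (2*k+1) ≠ 0 := pow_ne_zero _ hq0
    rw [e]
    field_simp
  rw [Finset.prod_congr rfl hfac, Finset.prod_div_distrib,
    Finset.prod_pow_eq_pow_sum, sum_exp]
  unfold g
  rw [div_div_eq_mul_div]
  congr 1
  have he : 2 * (n + 1) ^ 2 = 2 * n * (n + 1) + 2 * (n + 1) := by ring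
  rw [he, pow_add, one_div, inv_pow, inv_mul_cancel_left₀ (pow_ne_zero _ hq0)]

end WatsonAux

open WatsonAux in
/-- Watson's third-order mock theta function
`ρ(x) = Σ_{n=0}^∞ x^{2n(n+1)} / ∏_{k=0}^{n} (1 + x^{2k+1} + x^{4k+2})`
takes an irrational value at `x = 1/q` for every integer `q` with `|q| ≥ 2`. -/
theorem watson_rho_irrational (q : ℤ) (hq : 2 ≤ |q|) :
    Irrational (∑' n : ℕ,
      (1 / (q : ℝ)) ^ (2 * n * (n + 1)) /
        ∏ k ∈ Finset.range (n + 1),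
          (1 + (1 / (q : ℝ)) ^ (2 * k + 1) + (1 / (q : ℝ)) ^ (4 * k + 2))) := by
  have hS : (∑' n : ℕ,
      (1 / (q : ℝ)) ^ (2 * n * (n + 1)) /
        ∏ k ∈ Finset.range (n + 1),
          (1 + (1 / (q : ℝ)) ^ (2 * k + 1) + (1 / (q : ℝ)) ^ (4 * k + 2)))
      = ∑' n : ℕ, g q n := tsum_congr (f_eq_g q hq)
  rw [hS]
  by_contra h
  obtain ⟨r, hr⟩ := not_not.mp h
  have hgsum := g_summable q hq
  set S := ∑' n : ℕ, g q n with hSdef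
  set N := r.den with hNdef
  have hN1 : 1 ≤ N := r.pos
  set P : ℤ := ∏ k ∈ Finset.range (N+1), D q k with hPdef
  have hPpos : 0 < P := Finset.prod_pos fun k _ => D_pos q hq k
  have hPr : (P:ℝ) = ∏ k ∈ Finset.range (N+1), (D q k : ℝ) := by
    rw [hPdef]; push_cast; ring
  -- the tail
  set T := ∑' m : ℕ, g q (m + (N+1)) with hTdef
  have hTsumm : Summable (fun m => g q (m + (N+1))) := (summable_nat_add_iff _).2 hgsum
  have hTpos : 0 < T := Summable.tsum_pos hTsumm (fun m => (g_pos q hq _).le) 0 (g_pos q hq _)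
  have hTsplit : ∑ n ∈ Finset.range (N+1), g q n + T = S :=
    Summable.sum_add_tsum_nat_add (N+1) hgsum
  have hTle : T ≤ g q (N+1) * 2 := by
    have h1 : ∀ m : ℕ, g q (m + (N+1)) ≤ g q (N+1) * (1/2:ℝ)^m := by
      intro m
      have := g_decay q hq (N+1) m
      rwa [add_comm (N+1) m] at this
    have hgeo : Summable (fun m : ℕ => g q (N+1) * (1/2:ℝ)^m) :=
      (summable_geometric_of_lt_one (by norm_num) (by norm_num)).mul_left _
    calc T ≤ ∑' m : ℕ, g q (N+1) * (1/2:ℝ)^m := Summable.tsum_le_tsum h1 hTsumm hgeo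
      _ = g q (N+1) * 2 := by rw [tsum_mul_left, tsum_geometric_two]
  -- the key integer
  set Z : ℤ := r.num * P - (N:ℤ) * ∑ n ∈ Finset.range (N+1),
      (q ^ (2*(n+1)) * ∏ k ∈ Finset.Ico (n+1) (N+1), D q k) with hZdef
  have hbS : (N:ℝ) * S = (r.num:ℝ) := by
    rw [← hr, Rat.cast_def]
    have : ((N:ℚ):ℝ) ≠ 0 := by positivity
    field_simp
    rw [hNdef]; ring
  have hterm : ∀ n ∈ Finset.range (N+1),
      (q:ℝ) ^ (2*(n+1)) * ∏ k ∈ Finset.Ico (n+1) (N+1), (D q k : ℝ) = (P:ℝ) * g q n := by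
    intro n hn
    have hle : n + 1 ≤ N + 1 := Finset.mem_range.mp hn
    have hsplit : (∏ k ∈ Finset.range (n+1), (D q k:ℝ)) *
        ∏ k ∈ Finset.Ico (n+1) (N+1), (D q k:ℝ)
        = ∏ k ∈ Finset.range (N+1), (D q k:ℝ) :=
      Finset.prod_range_mul_prod_Ico _ hle
    have hne : (∏ k ∈ Finset.range (n+1), (D q k:ℝ)) ≠ 0 := (prodD_pos q hq _).ne'
    rw [g, hPr, ← hsplit]
    push_cast
    field_simp
  have hZreal : (Z:ℝ) = (N:ℝ) * P * T := by
    have hsum : ∑ n ∈ Finset.range (N+1),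
        ((q:ℝ) ^ (2*(n+1)) * ∏ k ∈ Finset.Ico (n+1) (N+1), (D q k : ℝ))
        = (P:ℝ) * ∑ n ∈ Finset.range (N+1), g q n := by
      rw [Finset.mul_sum]
      exact Finset.sum_congr rfl hterm
    have hTS : T = S - ∑ n ∈ Finset.range (N+1), g q n := by linarith
    rw [hZdef]
    push_cast
    rw [hsum, hTS, ← hbS]
    ring
  -- Z is positive
  have hZpos : (0:ℝ) < (Z:ℝ) := by
    rw [hZreal]
    have : (0:ℝ) < (N:ℝ) := by exact_mod_cast hN1
    have hP' : (0:ℝ) < (P:ℝ) := by exact_mod_cast hPpos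
    positivity
  -- Z is less than one
  have hPg : (P:ℝ) * g q (N+1) = (q:ℝ)^(2*(N+2)) / (D q (N+1) : ℝ) := by
    have hsp := Finset.prod_range_succ (fun k => ((D q k : ℤ) : ℝ)) (N+1)
    have hne : (∏ k ∈ Finset.range (N+1), (D q k:ℝ)) ≠ 0 := (prodD_pos q hq _).ne'
    have hDne : (D q (N+1) : ℝ) ≠ 0 := (Dr_pos q hq _).ne'
    rw [g, hsp, hPr, ← div_div, mul_div_assoc', mul_comm]
    field_simp
  have hqpow_pos : (0:ℤ) < q ^ (2*(N+2)) := by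
    have h2 : q ^ (2*(N+2)) = (q ^ (N+2)) ^ 2 := by rw [← pow_mul]; ring_nf
    have hne : q ≠ 0 := by rintro rfl; simp at hq
    rw [h2]
    exact (sq_nonneg _).lt_of_ne (Ne.symm (pow_ne_zero 2 (pow_ne_zero _ hne)))
  have hkey : 4 * (N:ℤ) * q ^ (2*(N+2)) < 2 * D q (N+1) := by
    have hD := D_lb q hq (N+1)
    have heq : |q| ^ (4*(N+1)+2) = |q|^(2*(N+2)) * |q|^(2*N+2) := by
      rw [← pow_add]; ring_nf
    have habs : |q|^(2*(N+2)) = q^(2*(N+2)) := by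
      calc |q| ^ (2*(N+2)) = (|q|^(N+2))^2 := by rw [← pow_mul]; ring_nf
        _ = (q^(N+2))^2 := by rw [← abs_pow, sq_abs]
        _ = q ^ (2*(N+2)) := by rw [← pow_mul]; ring_nf
    have hNlt : (N:ℤ) * 4 < |q| ^ (2*N+2) := by
      have h1 : (N:ℤ) < 4 ^ N := by
        exact_mod_cast Nat.lt_pow_self (n := N) (by norm_num : 1 < 4)
      have h2 : (4:ℤ)^N * 4 = 2^(2*N+2) := by
        have h4 : (4:ℤ) = 2^2 := by norm_num
        rw [h4, ← pow_mul, ← pow_add]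
      have h3 : (2:ℤ)^(2*N+2) ≤ |q|^(2*N+2) := pow_le_pow_left₀ (by norm_num) hq _
      nlinarith
    nlinarith [mul_lt_mul_of_pos_left hNlt hqpow_pos]
  have hZlt : (Z:ℝ) < 1 := by
    rw [hZreal]
    have hDr := Dr_pos q hq (N+1)
    have hP' : (0:ℝ) < (P:ℝ) := by exact_mod_cast hPpos
    have hN' : (0:ℝ) < (N:ℝ) := by exact_mod_cast hN1
    have hb1 : (N:ℝ) * P * T ≤ (N:ℝ) * (P * g q (N+1)) * 2 := by
      have := mul_le_mul_of_nonneg_left hTle (by positivity : (0:ℝ) ≤ (N:ℝ) * P)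
      calc (N:ℝ) * P * T = (N:ℝ) * P * T := rfl
        _ ≤ (N:ℝ) * P * (g q (N+1) * 2) := this
        _ = (N:ℝ) * (P * g q (N+1)) * 2 := by ring
    rw [hPg] at hb1
    have hkeyR : 4 * (N:ℝ) * (q:ℝ) ^ (2*(N+2)) < 2 * (D q (N+1) : ℝ) := by
      exact_mod_cast hkey
    have h4 : 2*(N:ℝ)*(q:ℝ)^(2*(N+2)) < (D q (N+1):ℝ) := by linarith
    have h5 : (N:ℝ) * ((q:ℝ)^(2*(N+2)) / (D q (N+1):ℝ)) * 2 < 1 := by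
      have heq2 : (N:ℝ) * ((q:ℝ)^(2*(N+2)) / (D q (N+1):ℝ)) * 2
          = (2*(N:ℝ)*(q:ℝ)^(2*(N+2))) / (D q (N+1):ℝ) := by ring
      rw [heq2, div_lt_one hDr]
      exact h4
    linarith
  have hZ0 : 0 < Z := by exact_mod_cast hZpos
  have hZ1 : Z < 1 := by exact_mod_cast hZlt
  omega
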